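/- For n ≥ 2, every vertex of the group inverse graph P_{2n+1}# of the odd path P_{2n+1} has degree at least two; in particular P_{2n+1}# has no pendant vertices, and P_{2n+1} is a spanning subgraph of P_{2n+1}#. -/

import Mathlib

open SimpleGraph

/-- `X` is the group inverse of `A`. -/
def IsGroupInverse {n : Type*} [Fintype n] (A X : Matrix n n ℝ) : Prop :=
  A * X * A = A ∧ X * A * X = X ∧ A * X = X * A

/-- A matching of a graph: a set of pairwise non-incident edges. -/
def IsMatching {V : Type*} (G : SimpleGraph V) (M : Finset (Sym2 V)) : Prop :=
  (↑M : Set (Sym2 V)) ⊆ G.edgeSet ∧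
    ∀ e ∈ M, ∀ f ∈ M, e ≠ f → ∀ v : V, ¬(v ∈ e ∧ v ∈ f)

/-- A maximum matching: a matching of maximum cardinality. -/
def IsMaxMatching {V : Type*} (G : SimpleGraph V) (M : Finset (Sym2 V)) : Prop :=
  IsMatching G M ∧ ∀ N : Finset (Sym2 V), IsMatching G N → N.card ≤ M.card

/-- A nonempty list of edges alternately in and out of `M`,
beginning and ending with edges of `M`. -/
def IsAltEdgeList {V : Type*} (M : Set (Sym2 V)) : List (Sym2 V) → Prop
  | [] => False
  | [e] => e ∈ M
  | e :: f :: rest => e ∈ M ∧ f ∉ M ∧ IsAltEdgeList M rest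

/-- A pair of vertices is maximally matchable if they are joined by a path that is
alternating with respect to some maximum matching. -/
def MaxMatchable {V : Type*} (G : SimpleGraph V) (u v : V) : Prop :=
  ∃ (p : G.Walk u v) (M : Finset (Sym2 V)),
    p.IsPath ∧ IsMaxMatching G M ∧ IsAltEdgeList (↑M) p.edges

/-- `G` is a star: some center `c` is adjacent to exactly the other vertices,
and there are no other edges. -/
def IsStar {V : Type*} (G : SimpleGraph V) : Prop :=
  ∃ c : V, ∀ u v : V, G.Adj u v ↔ ((u = c ∧ v ≠ c) ∨ (v = c ∧ u ≠ c))

/-- The class 𝕋: trees with at least one non-pendant vertex in which every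
non-pendant vertex is adjacent to a pendant vertex. -/
def InClassT {V : Type*} [Fintype V] (T : SimpleGraph V) [DecidableRel T.Adj] : Prop :=
  T.IsTree ∧ (∃ v, T.degree v ≠ 1) ∧
    ∀ v, T.degree v ≠ 1 → ∃ u, T.Adj v u ∧ T.degree u = 1

/-- The number of pendant neighbours of `v`. -/
def pendantNbrs {V : Type*} [Fintype V] [DecidableEq V] (T : SimpleGraph V)
    [DecidableRel T.Adj] (v : V) : ℕ :=
  ((T.neighborFinset v).filter fun u => T.degree u = 1).card

namespace OddPathAux


/-- Edge `{j, j+1}` in `Fin (2n+1)` (values taken mod `2n+1`). -/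
def Ed (n : ℕ) (j : ℕ) : Sym2 (Fin (2*n+1)) :=
  s(⟨j % (2*n+1), Nat.mod_lt _ (by omega)⟩, ⟨(j+1) % (2*n+1), Nat.mod_lt _ (by omega)⟩)

lemma Ed_eq {n j : ℕ} (h1 : j < 2*n+1) (h2 : j+1 < 2*n+1) :
    Ed n j = s(⟨j, h1⟩, ⟨j+1, h2⟩) := by
  simp [Ed, Nat.mod_eq_of_lt, h1, h2]

lemma Ed_mem_edgeSet {n j : ℕ} (h : j < 2*n) :
    Ed n j ∈ (pathGraph (2*n+1)).edgeSet := by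
  rw [Ed_eq (by omega) (by omega), SimpleGraph.mem_edgeSet, pathGraph_adj]
  left; rfl

lemma mem_Ed_iff {n j : ℕ} (h : j < 2*n) (v : Fin (2*n+1)) :
    v ∈ Ed n j ↔ v.val = j ∨ v.val = j + 1 := by
  rw [Ed_eq (by omega) (by omega), Sym2.mem_iff]
  constructor
  · rintro (rfl | rfl) <;> simp
  · rintro (hv | hv) <;> [left; right] <;> exact Fin.ext hv

lemma Ed_inj {n j k : ℕ} (hj : j < 2*n) (hk : k < 2*n) (h : Ed n j = Ed n k) : j = k := by
  rw [Ed_eq (by omega : j < 2*n+1) (by omega), Ed_eq (by omega : k < 2*n+1) (by omega),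
    Sym2.eq_iff] at h
  rcases h with ⟨h1, h2⟩ | ⟨h1, h2⟩ <;>
    simp only [Fin.mk.injEq] at h1 h2 <;> omega

/-- Every edge of the path is some `Ed n j`. -/
lemma edge_eq_Ed {n : ℕ} {e : Sym2 (Fin (2*n+1))}
    (he : e ∈ (pathGraph (2*n+1)).edgeSet) : ∃ j < 2*n, e = Ed n j := by
  induction e with
  | _ a b =>
    rw [SimpleGraph.mem_edgeSet, pathGraph_adj] at he
    rcases he with h | h
    · refine ⟨a.val, by omega, ?_⟩
      rw [Ed_eq (by omega) (by omega), Sym2.eq_iff]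
      exact Or.inl ⟨Fin.ext rfl, Fin.ext h.symm⟩
    · refine ⟨b.val, by omega, ?_⟩
      rw [Ed_eq (by omega) (by omega), Sym2.eq_iff]
      exact Or.inr ⟨Fin.ext h.symm, Fin.ext rfl⟩

/-- index set of the maximum matching through edge `i`. -/
def Kset (n i : ℕ) : Finset ℕ :=
  (Finset.range (2*n)).filter (fun j => (j + 1 < i ∧ j % 2 = 0) ∨ (i ≤ j ∧ j % 2 = i % 2))

lemma mem_Kset {n i j : ℕ} : j ∈ Kset n i ↔
    j < 2*n ∧ ((j + 1 < i ∧ j % 2 = 0) ∨ (i ≤ j ∧ j % 2 = i % 2)) := by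
  simp [Kset, Finset.mem_filter, Finset.mem_range]

lemma Kset_no_consec {n i j k : ℕ} (hj : j ∈ Kset n i) (hk : k ∈ Kset n i) (h : k = j + 1) :
    False := by
  rw [mem_Kset] at hj hk; omega

lemma self_mem_Kset {n i : ℕ} (h : i < 2*n) : i ∈ Kset n i := by
  rw [mem_Kset]; omega

lemma Kset_card {n i : ℕ} (hi : i < 2*n) : (Kset n i).card = n := by
  have : (Kset n i).card = (Finset.range n).card := by
    apply Finset.card_nbij' (fun j => j / 2)
      (fun k => if 2*k+1 < i then 2*k else if i % 2 = 0 then 2*k else 2*k+1)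
    · intro j hj; rw [Finset.mem_coe, mem_Kset] at hj; rw [Finset.mem_coe, Finset.mem_range]; beta_reduce; omega
    · intro k hk; rw [Finset.mem_coe, Finset.mem_range] at hk; rw [Finset.mem_coe, mem_Kset]; beta_reduce; split_ifs <;> omega
    · intro j hj; rw [Finset.mem_coe, mem_Kset] at hj; beta_reduce; split_ifs <;> omega
    · intro k hk; rw [Finset.mem_coe, Finset.mem_range] at hk; beta_reduce; split_ifs <;> omega
  simpa using this


/-- The matching through edge `i`. -/
def Mm (n i : ℕ) : Finset (Sym2 (Fin (2*n+1))) := (Kset n i).image (Ed n)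

lemma mem_Mm {n i : ℕ} {e : Sym2 (Fin (2*n+1))} :
    e ∈ Mm n i ↔ ∃ j ∈ Kset n i, Ed n j = e := Finset.mem_image

lemma Ed_mem_Mm {n i j : ℕ} (hj : j ∈ Kset n i) : Ed n j ∈ Mm n i :=
  Finset.mem_image_of_mem _ hj

lemma Mm_isMatching (n i : ℕ) : IsMatching (pathGraph (2*n+1)) (Mm n i) := by
  constructor
  · intro e he
    rw [Finset.mem_coe, mem_Mm] at he
    obtain ⟨j, hj, rfl⟩ := he
    exact Ed_mem_edgeSet (mem_Kset.mp hj).1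
  · rintro e he f hf hne v ⟨hve, hvf⟩
    rw [mem_Mm] at he hf
    obtain ⟨j, hj, rfl⟩ := he
    obtain ⟨k, hk, rfl⟩ := hf
    have hj2 := (mem_Kset.mp hj).1
    have hk2 := (mem_Kset.mp hk).1
    rw [mem_Ed_iff hj2] at hve
    rw [mem_Ed_iff hk2] at hvf
    have hjk : j ≠ k := fun h => hne (by rw [h])
    have h1 : ¬ (k = j+1) := fun h => Kset_no_consec hj hk h
    have h2 : ¬ (j = k+1) := fun h => Kset_no_consec hk hj h
    omega

/-- The min endpoint of an edge. -/
def mval {n : ℕ} : Sym2 (Fin (2*n+1)) → ℕ :=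
  Sym2.lift ⟨fun a b => min a.val b.val, fun a b => min_comm _ _⟩

lemma mval_Ed {n j : ℕ} (h : j < 2*n) : mval (Ed n j) = j := by
  rw [Ed_eq (by omega : j < 2*n+1) (by omega)]
  simp only [mval, Sym2.lift_mk]
  omega

lemma matching_card_le {n : ℕ} {N : Finset (Sym2 (Fin (2*n+1)))}
    (hN : IsMatching (pathGraph (2*n+1)) N) : N.card ≤ n := by
  have key : ∀ e ∈ N, ∃ j < 2*n, e = Ed n j := fun e he =>
    edge_eq_Ed (hN.1 (Finset.mem_coe.mpr he))
  have := Finset.card_le_card_of_injOn (f := fun e => mval e / 2) (t := Finset.range n)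
    (fun e he => by
      obtain ⟨j, hjlt, rfl⟩ := key e he
      simp only [Finset.mem_coe, Finset.mem_range, mval_Ed hjlt]; omega)
    (fun e he f hf hef => by
      simp only [Finset.mem_coe] at he hf
      obtain ⟨j, hjlt, rfl⟩ := key e he
      obtain ⟨k, hklt, rfl⟩ := key f hf
      simp only [mval_Ed hjlt, mval_Ed hklt] at hef
      by_cases hjk : j = k
      · rw [hjk]
      · exfalso
        have hne : Ed n j ≠ Ed n k := fun h => hjk (Ed_inj hjlt hklt h)
        refine hN.2 _ he _ hf hne ⟨max j k, by omega⟩ ⟨?_, ?_⟩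
        · rw [mem_Ed_iff hjlt]; simp only []; omega
        · rw [mem_Ed_iff hklt]; simp only []; omega)
  simpa using this

lemma Mm_isMax {n i : ℕ} (hi : i < 2*n) :
    IsMaxMatching (pathGraph (2*n+1)) (Mm n i) := by
  refine ⟨Mm_isMatching n i, fun N hN => (matching_card_le hN).trans ?_⟩
  rw [Mm, Finset.card_image_of_injOn, Kset_card hi]
  intro j hj k hk h
  exact Ed_inj (mem_Kset.mp (Finset.mem_coe.mp hj)).1 (mem_Kset.mp (Finset.mem_coe.mp hk)).1 h

lemma not_mem_Mm {n i j : ℕ} (hj : j < 2*n) (h : j ∉ Kset n i) : Ed n j ∉ Mm n i := by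
  intro hmem
  rw [mem_Mm] at hmem
  obtain ⟨k, hk, hEd⟩ := hmem
  exact h (Ed_inj (mem_Kset.mp hk).1 hj hEd ▸ hk)

lemma maxMatchable_adj {n j : ℕ} (hj : j < 2*n) :
    MaxMatchable (pathGraph (2*n+1)) ⟨j, by omega⟩ ⟨j+1, by omega⟩ := by
  have hadj : (pathGraph (2*n+1)).Adj ⟨j, by omega⟩ ⟨j+1, by omega⟩ := by
    rw [pathGraph_adj]; left; rfl
  refine ⟨Walk.cons hadj Walk.nil, Mm n j, ?_, Mm_isMax hj, ?_⟩
  · rw [SimpleGraph.Walk.isPath_def]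
    simp [Fin.ext_iff]
  · simp only [Walk.edges_cons, Walk.edges_nil, IsAltEdgeList, Finset.mem_coe, SimpleGraph.Dart.edge]
    rw [← Ed_eq (by omega) (by omega)]
    exact Ed_mem_Mm (self_mem_Kset hj)


lemma Ed_eq'' {n j : ℕ} (h2 : j+1 < 2*n+1) {a b : Fin (2*n+1)} (ha : a.val = j)
    (hb : b.val = j+1) : Ed n j = s(a, b) := by
  rw [Ed_eq (by omega) h2, Sym2.eq_iff]
  exact Or.inl ⟨Fin.ext ha.symm, Fin.ext hb.symm⟩

lemma maxMatchable_three {n i m : ℕ} (hm : m < 2*n) (hi : i + 2 < 2*n)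
    (h1 : i ∈ Kset n m) (h2 : i + 1 ∉ Kset n m) (h3 : i + 2 ∈ Kset n m) :
    MaxMatchable (pathGraph (2*n+1)) ⟨i, by omega⟩ ⟨i+3, by omega⟩ := by
  have a1 : (pathGraph (2*n+1)).Adj ⟨i, by omega⟩ ⟨i+1, by omega⟩ := by
    rw [pathGraph_adj]; left; rfl
  have a2 : (pathGraph (2*n+1)).Adj ⟨i+1, by omega⟩ ⟨i+2, by omega⟩ := by
    rw [pathGraph_adj]; left; rfl
  have a3 : (pathGraph (2*n+1)).Adj ⟨i+2, by omega⟩ ⟨i+3, by omega⟩ := by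
    rw [pathGraph_adj]; left; rfl
  refine ⟨.cons a1 (.cons a2 (.cons a3 .nil)), Mm n m, ?_, Mm_isMax hm, ?_⟩
  · rw [SimpleGraph.Walk.isPath_def]
    simp [Fin.ext_iff]
  · simp only [Walk.edges_cons, Walk.edges_nil, IsAltEdgeList, Finset.mem_coe,
      SimpleGraph.Dart.edge]
    refine ⟨?_, ?_, ?_⟩
    · rw [← Ed_eq'' (j := i) (by omega) rfl rfl]
      exact Ed_mem_Mm h1
    · rw [← Ed_eq'' (j := i+1) (by omega) rfl rfl]
      exact not_mem_Mm (by omega) h2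
    · rw [← Ed_eq'' (j := i+2) (by omega) rfl rfl]
      exact Ed_mem_Mm h3

lemma maxMatchable_03 {n : ℕ} (hn : 2 ≤ n) :
    MaxMatchable (pathGraph (2*n+1)) ⟨0, by omega⟩ ⟨3, by omega⟩ :=
  maxMatchable_three (m := 0) (by omega) (by omega)
    (by rw [mem_Kset]; omega) (by rw [mem_Kset]; omega) (by rw [mem_Kset]; omega)

lemma maxMatchable_end {n : ℕ} (hn : 2 ≤ n) :
    MaxMatchable (pathGraph (2*n+1)) ⟨2*n-3, by omega⟩ ⟨2*n-3+3, by omega⟩ :=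
  maxMatchable_three (m := 2*n-3) (by omega) (by omega)
    (by rw [mem_Kset]; omega) (by rw [mem_Kset]; omega) (by rw [mem_Kset]; omega)


lemma maxMatchable_of_val {n : ℕ} {u w : Fin (2*n+1)} (h : u.val + 1 = w.val) :
    MaxMatchable (pathGraph (2*n+1)) u w := by
  rcases u with ⟨uv, hult⟩
  rcases w with ⟨wv, hwlt⟩
  have h' : uv + 1 = wv := h
  subst h'
  exact maxMatchable_adj (by omega)

end OddPathAux

open OddPathAux in
/-- For n ≥ 2, every vertex of the group inverse graph of the odd
path P_{2n+1} has degree at least two (no pendant vertices), and P_{2n+1} is a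
spanning subgraph of its group inverse graph. -/
theorem odd_path_group_inverse_no_pendant (n : ℕ) (hn : 2 ≤ n) :
    (∀ v : Fin (2 * n + 1),
      2 ≤ ((SimpleGraph.fromRel
        (MaxMatchable (SimpleGraph.pathGraph (2 * n + 1)))).neighborSet v).ncard) ∧
    SimpleGraph.pathGraph (2 * n + 1) ≤
      SimpleGraph.fromRel (MaxMatchable (SimpleGraph.pathGraph (2 * n + 1))) := by
  have hmem : ∀ (u w : Fin (2*n+1)), u ≠ w → MaxMatchable (pathGraph (2*n+1)) u w →
      (w ∈ (fromRel (MaxMatchable (pathGraph (2*n+1)))).neighborSet u ∧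
       u ∈ (fromRel (MaxMatchable (pathGraph (2*n+1)))).neighborSet w) := by
    intro u w hne hmm
    constructor
    · rw [SimpleGraph.mem_neighborSet, fromRel_adj]
      exact ⟨hne, Or.inl hmm⟩
    · rw [SimpleGraph.mem_neighborSet, fromRel_adj]
      exact ⟨hne.symm, Or.inr hmm⟩
  constructor
  · intro v
    have hfin := Set.toFinite ((fromRel (MaxMatchable (pathGraph (2*n+1)))).neighborSet v)
    refine (Set.one_lt_ncard_iff hfin).mpr ?_
    by_cases h0 : v.val = 0
    · refine ⟨⟨1, by omega⟩, ⟨3, by omega⟩, ?_, ?_, by simp [Fin.ext_iff]⟩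
      · exact (hmem v ⟨1, by omega⟩ (by simp only [ne_eq, Fin.ext_iff]; omega)
          (maxMatchable_of_val (show v.val + 1 = 1 by omega))).1
      · have hv : v = ⟨0, by omega⟩ := Fin.ext h0
        rw [hv]
        exact (hmem _ _ (by simp [Fin.ext_iff]) (maxMatchable_03 hn)).1
    · by_cases h2n : v.val = 2*n
      · have hv : v = ⟨2*n-3+3, by omega⟩ := Fin.ext (by simpa using by omega)
        refine ⟨⟨2*n-1, by omega⟩, ⟨2*n-3, by omega⟩, ?_, ?_, by simp only [ne_eq, Fin.ext_iff]; omega⟩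
        · refine (hmem ⟨2*n-1, by omega⟩ v (by simp only [ne_eq, Fin.ext_iff]; omega)
            (maxMatchable_of_val (show 2*n-1 + 1 = v.val by omega))).2
        · rw [hv]
          exact (hmem _ _ (by simp only [ne_eq, Fin.ext_iff]; omega) (maxMatchable_end hn)).2
      · refine ⟨⟨v.val - 1, by omega⟩, ⟨v.val + 1, by omega⟩, ?_, ?_,
          by simp only [ne_eq, Fin.ext_iff]; omega⟩
        · refine (hmem ⟨v.val - 1, by omega⟩ v (by simp only [ne_eq, Fin.ext_iff]; omega)
            (maxMatchable_of_val (show v.val - 1 + 1 = v.val by omega))).2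
        · exact (hmem v ⟨v.val + 1, by omega⟩ (by simp only [ne_eq, Fin.ext_iff]; omega)
            (maxMatchable_of_val (show v.val + 1 = v.val + 1 from rfl))).1
  · intro u w h
    rw [pathGraph_adj] at h
    rw [fromRel_adj]
    refine ⟨fun he => by rw [he] at h; omega, ?_⟩
    rcases h with h | h
    · exact Or.inl (maxMatchable_of_val h)
    · exact Or.inr (maxMatchable_of_val h)
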